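/- Let 0 < α < n and let D be a dyadic grid in ℝ^n. For every nonnegative f ∈ L¹_loc(ℝ^n) with ⟨f⟩_Q → 0 as |Q| → ∞ over Q ∈ D, there exists a sparse family S = S(f) ⊂ D and a constant C(n,α) independent of f such that for every x ∈ ℝ^n, I_α^S f(x) ≤ I_α^D f(x) ≤ C(n,α) I_α^S f(x). -/

import Mathlib

open MeasureTheory ENNReal Set Filter
open scoped NNReal

noncomputable section

abbrev Eucl (n : ℕ) := EuclideanSpace ℝ (Fin n)

/-- The half-open cube in `ℝⁿ` with corner `a` and side length `h`. -/
def cube (n : ℕ) (a : Fin n → ℝ) (h : ℝ) : Set (Eucl n) :=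
  {x | ∀ i, a i ≤ x i ∧ x i < a i + h}

/-- Average of an `ℝ≥0∞`-valued function over a set (w.r.t. Lebesgue measure). -/
def lavg {n : ℕ} (Q : Set (Eucl n)) (g : Eucl n → ℝ≥0∞) : ℝ≥0∞ :=
  (∫⁻ x in Q, g x) / volume Q

/-- `u(E) = ∫_E u dx` for a weight `u`. -/
def setW {n : ℕ} (u : Eucl n → ℝ) (s : Set (Eucl n)) : ℝ≥0∞ :=
  ∫⁻ x in s, ENNReal.ofReal (u x)

/-- A weight: nonnegative, measurable, positive on a set of positive measure. -/
def Weight {n : ℕ} (u : Eucl n → ℝ) : Prop :=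
  Measurable u ∧ (∀ x, 0 ≤ u x) ∧ 0 < volume {x | 0 < u x}

/-- The fractional maximal operator `M_α`. -/
def maxFn (n : ℕ) (α : ℝ) (f : Eucl n → ℝ) (x : Eucl n) : ℝ≥0∞ :=
  ⨆ (a : Fin n → ℝ) (h : ℝ) (_ : 0 < h) (_ : x ∈ cube n a h),
    volume (cube n a h) ^ (α / (n:ℝ)) * lavg (cube n a h) (fun y => ENNReal.ofReal |f y|)

/-- The fractional maximal operator restricted to a family of cubes. -/
def maxFnGrid (n : ℕ) (α : ℝ) (D : Set (Set (Eucl n))) (f : Eucl n → ℝ) (x : Eucl n) : ℝ≥0∞ :=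
  ⨆ (Q : Set (Eucl n)) (_ : Q ∈ D) (_ : x ∈ Q),
    volume Q ^ (α / (n:ℝ)) * lavg Q (fun y => ENNReal.ofReal |f y|)

/-- The fractional integral `I_α`, as a positive (`ℝ≥0∞`-valued) operator. -/
def fracIntE (n : ℕ) (α : ℝ) (f : Eucl n → ℝ) (x : Eucl n) : ℝ≥0∞ :=
  ∫⁻ y, ENNReal.ofReal (f y) * ENNReal.ofReal (‖x - y‖ ^ (α - (n:ℝ)))

/-- The dyadic fractional integral associated to a family of cubes. -/
def fracIntGrid (n : ℕ) (α : ℝ) (D : Set (Set (Eucl n))) (f : Eucl n → ℝ) (x : Eucl n) : ℝ≥0∞ :=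
  ∑' Q : D, Set.indicator (Q : Set (Eucl n))
    (fun _ => volume (Q : Set (Eucl n)) ^ (α / (n:ℝ)) *
      lavg (Q : Set (Eucl n)) (fun y => ENNReal.ofReal (f y))) x

/-- The standard dyadic grid `Δ`. -/
def stdGrid (n : ℕ) : Set (Set (Eucl n)) :=
  {Q | ∃ (k : ℤ) (m : Fin n → ℤ), Q = cube n (fun i => (2:ℝ) ^ k * (m i : ℝ)) ((2:ℝ) ^ k)}

/-- The translated dyadic grids `𝒟^t`. -/
def transGrid (n : ℕ) (t : Fin n → ℝ) : Set (Set (Eucl n)) :=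
  {Q | ∃ (j : ℤ) (m : Fin n → ℤ), Q = cube n (fun i => (2:ℝ) ^ j * ((m i : ℝ) + t i)) ((2:ℝ) ^ j)}

def thirds : Set ℝ := {0, 1/3, -1/3}

/-- A collection of cubes is a dyadic grid. -/
def IsDyadicGrid (n : ℕ) (D : Set (Set (Eucl n))) : Prop :=
  (∀ Q ∈ D, ∃ (a : Fin n → ℝ) (k : ℤ), Q = cube n a ((2:ℝ) ^ k)) ∧
  (∀ P ∈ D, ∀ Q ∈ D, P ∩ Q = P ∨ P ∩ Q = Q ∨ P ∩ Q = ∅) ∧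
  (∀ (k : ℤ) (x : Eucl n), ∃! Q, Q ∈ D ∧ (∃ a, Q = cube n a ((2:ℝ) ^ k)) ∧ x ∈ Q)

/-- The set `E(Q) = Q \ ⋃ {P ∈ S : P ⊊ Q}`. -/
def sparseE {n : ℕ} (S : Set (Set (Eucl n))) (Q : Set (Eucl n)) : Set (Eucl n) :=
  Q \ ⋃ P ∈ {P | P ∈ S ∧ P ⊂ Q}, P

/-- A sparse family of cubes. -/
def IsSparse {n : ℕ} (S : Set (Set (Eucl n))) : Prop :=
  ∀ Q ∈ S, volume Q ≤ 2 * volume (sparseE S Q)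

/-- The sparse linearized maximal operator `L_α^S`. -/
def sparseL (n : ℕ) (α : ℝ) (S : Set (Set (Eucl n))) (f : Eucl n → ℝ) (x : Eucl n) : ℝ≥0∞ :=
  ∑' Q : S, Set.indicator (sparseE S (Q : Set (Eucl n)))
    (fun _ => volume (Q : Set (Eucl n)) ^ (α / (n:ℝ)) *
      lavg (Q : Set (Eucl n)) (fun y => ENNReal.ofReal (f y))) x

/-- The Calderón–Zygmund cubes: the maximal cubes `Q ∈ Δ` with `⟨|f|⟩_Q > λ`. -/
def czCubes (n : ℕ) (f : Eucl n → ℝ) (lam : ℝ) : Set (Set (Eucl n)) :=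
  {Q | Q ∈ stdGrid n ∧ ENNReal.ofReal lam < lavg Q (fun y => ENNReal.ofReal |f y|) ∧
    ∀ P ∈ stdGrid n, Q ⊆ P →
      ENNReal.ofReal lam < lavg P (fun y => ENNReal.ofReal |f y|) → P = Q}

/-- The one-weight `A_{p,q}` constant, `1 < p`. -/
def apqConst (n : ℕ) (p q : ℝ) (w : Eucl n → ℝ) : ℝ≥0∞ :=
  ⨆ (a : Fin n → ℝ) (h : ℝ) (_ : 0 < h),
    (lavg (cube n a h) (fun x => ENNReal.ofReal (w x ^ q))) ^ (1/q) *
    (lavg (cube n a h) (fun x => ENNReal.ofReal (w x ^ (-(p/(p-1)))))) ^ (1 - 1/p)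

/-- The one-weight `A_{1,q}` constant. -/
def a1qConst (n : ℕ) (q : ℝ) (w : Eucl n → ℝ) : ℝ≥0∞ :=
  ⨆ (a : Fin n → ℝ) (h : ℝ) (_ : 0 < h),
    (lavg (cube n a h) (fun x => ENNReal.ofReal (w x ^ q))) ^ (1/q) *
    essSup (fun x => ENNReal.ofReal (w x)⁻¹) (volume.restrict (cube n a h))

/-- The two-weight `A_{p,q}^α` constant. -/
def apqAlpha (n : ℕ) (α p q : ℝ) (u σ : Eucl n → ℝ) : ℝ≥0∞ :=
  ⨆ (a : Fin n → ℝ) (h : ℝ) (_ : 0 < h),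
    volume (cube n a h) ^ (α / (n:ℝ) + 1/q - 1/p) *
    ((lavg (cube n a h) (fun x => ENNReal.ofReal (u x))) ^ (1/q) *
     (lavg (cube n a h) (fun x => ENNReal.ofReal (σ x))) ^ (1 - 1/p))

/-- Sawyer testing constant for the fractional maximal operator. -/
def maxTestConst (n : ℕ) (α p q : ℝ) (u σ : Eucl n → ℝ) : ℝ≥0∞ :=
  ⨆ (a : Fin n → ℝ) (h : ℝ) (_ : 0 < h) (_ : 0 < setW σ (cube n a h)),
    setW σ (cube n a h) ^ (-(1/p)) *
    (∫⁻ x in cube n a h,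
      (maxFn n α ((cube n a h).indicator σ) x) ^ q * ENNReal.ofReal (u x)) ^ (1/q)

/-- Sawyer testing constant for the fractional integral operator. -/
def fracTestConst (n : ℕ) (α p q : ℝ) (u σ : Eucl n → ℝ) : ℝ≥0∞ :=
  ⨆ (a : Fin n → ℝ) (h : ℝ) (_ : 0 < h) (_ : 0 < setW σ (cube n a h)),
    setW σ (cube n a h) ^ (-(1/p)) *
    (∫⁻ x in cube n a h,
      (fracIntE n α ((cube n a h).indicator σ) x) ^ q * ENNReal.ofReal (u x)) ^ (1/q)

/-- The BMO seminorm. -/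
def bmoNorm (n : ℕ) (b : Eucl n → ℝ) : ℝ≥0∞ :=
  ⨆ (a : Fin n → ℝ) (h : ℝ) (_ : 0 < h),
    lavg (cube n a h) (fun x => ENNReal.ofReal |b x - ⨍ y in cube n a h, b y|)

/-- The commutator `[b, I_α] f`. -/
def commFrac (n : ℕ) (α : ℝ) (b f : Eucl n → ℝ) (x : Eucl n) : ℝ :=
  ∫ y, (b x - b y) * f y * ‖x - y‖ ^ (α - (n:ℝ))

/-- The dyadic commutator-type operator `C_b^D`. -/
def commGrid (n : ℕ) (α : ℝ) (D : Set (Set (Eucl n))) (b f : Eucl n → ℝ) (x : Eucl n) : ℝ≥0∞ :=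
  ∑' Q : D, Set.indicator (Q : Set (Eucl n))
    (fun _ => volume (Q : Set (Eucl n)) ^ (α / (n:ℝ)) *
      lavg (Q : Set (Eucl n)) (fun y => ENNReal.ofReal (|b x - b y| * f y))) x

/-- Young functions. -/
def IsYoung (B : ℝ → ℝ) : Prop :=
  ContinuousOn B (Ici 0) ∧ ConvexOn ℝ (Ici 0) B ∧ StrictMonoOn B (Ici 0) ∧
  B 0 = 0 ∧ Tendsto (fun t => B t / t) atTop atTop

/-- The associate Young function `B̄(t) = sup_{s>0} (st − B(s))`. -/
def youngConj (B : ℝ → ℝ) (t : ℝ) : ℝ :=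
  sSup ((fun s => s * t - B s) '' Ioi 0)

/-- The `B_p` condition: `∫_1^∞ B(t)/t^p dt/t < ∞`. -/
def IsBp (B : ℝ → ℝ) (p : ℝ) : Prop :=
  IntegrableOn (fun t => B t / t ^ (p + 1)) (Ioi 1)

/-- The normalized Luxemburg norm of `f` on the cube `Q`. -/
def luxNorm {n : ℕ} (B : ℝ → ℝ) (Q : Set (Eucl n)) (f : Eucl n → ℝ) : ℝ :=
  sInf {lam : ℝ | 0 < lam ∧ (⨍ x in Q, B (|f x| / lam)) ≤ 1}

/-- The separated bump constant `[u,σ]_{A_{p,q,B}^α}` (bump on the right). -/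
def bumpRight (n : ℕ) (α p q : ℝ) (B : ℝ → ℝ) (u σ : Eucl n → ℝ) : ℝ≥0∞ :=
  ⨆ (a : Fin n → ℝ) (h : ℝ) (_ : 0 < h),
    volume (cube n a h) ^ (α / (n:ℝ) + 1/q - 1/p) *
    ((lavg (cube n a h) (fun x => ENNReal.ofReal (u x))) ^ (1/q) *
     ENNReal.ofReal (luxNorm B (cube n a h) (fun x => σ x ^ ((p-1)/p))))

/-- The conjoined bump constant `[u,σ]_{A_{p,q,A,B}^α}`. -/
def bumpBoth (n : ℕ) (α p q : ℝ) (A B : ℝ → ℝ) (u σ : Eucl n → ℝ) : ℝ≥0∞ :=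
  ⨆ (a : Fin n → ℝ) (h : ℝ) (_ : 0 < h),
    volume (cube n a h) ^ (α / (n:ℝ) + 1/q - 1/p) *
    (ENNReal.ofReal (luxNorm A (cube n a h) (fun x => u x ^ (1/q))) *
     ENNReal.ofReal (luxNorm B (cube n a h) (fun x => σ x ^ ((p-1)/p))))

/-- Strong operator norm of `I_α(·σ) : L^p(σ) → L^q(u)`. -/
def strongNormI (n : ℕ) (α p q : ℝ) (u σ : Eucl n → ℝ) : ℝ≥0∞ :=
  ⨆ (f : Eucl n → ℝ) (_ : Measurable f)
    (_ : (∫⁻ x, ENNReal.ofReal |f x| ^ p * ENNReal.ofReal (σ x)) ≤ 1),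
    (∫⁻ x, (fracIntE n α (fun y => |f y| * σ y) x) ^ q * ENNReal.ofReal (u x)) ^ (1/q)

/-- Weak operator norm of `I_α(·σ) : L^p(σ) → L^{q,∞}(u)`. -/
def weakNormI (n : ℕ) (α p q : ℝ) (u σ : Eucl n → ℝ) : ℝ≥0∞ :=
  ⨆ (f : Eucl n → ℝ) (_ : Measurable f)
    (_ : (∫⁻ x, ENNReal.ofReal |f x| ^ p * ENNReal.ofReal (σ x)) ≤ 1)
    (t : ℝ) (_ : 0 < t),
    ENNReal.ofReal t *
      (setW u {x | ENNReal.ofReal t < fracIntE n α (fun y => |f y| * σ y) x}) ^ (1/q)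

end

/-!
Fix `x`. The cubes of `D` containing `x` form a chain `Q_k(x)`, `k ∈ ℤ`, of side lengths `2^k`,
so `I_α^D f(x) = ∑_k |Q_k(x)|^{α/n} ⟨f⟩_{Q_k(x)}`, and the weights grow geometrically with ratio
`2^α`. Let `b = 2^{n+1}` and let `S` consist of the cubes of `D` that are maximal among those with
`⟨f⟩_Q > b^j`, for some `j ∈ ℤ`; maximal cubes exist because averages vanish at large scales.
If `b^j < ⟨f⟩_{Q_k(x)} ≤ b^{j+1}`, the maximal cube above `Q_k(x)` at level `b^j` is some
`Q_m(x) ∈ S` with `m ≥ k` and `⟨f⟩_{Q_k(x)} ≤ b ⟨f⟩_{Q_m(x)}`; summing the geometric series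
`∑_{k ≤ m} |Q_k(x)|^{α/n}` gives `I_α^D f ≤ b (1 - 2^{-α})⁻¹ I_α^S f`.

For sparseness, let `P ∈ S` with `b^k < ⟨f⟩_P ≤ b^{k+1}`. Then `P` is maximal at level `b^k`, so
its parent has average at most `b^k` and `∫_P f ≤ 2^n b^k |P|`. Every smaller cube of `S` inside
`P` lies in a maximal cube at level `b^{k+1}` inside `P`, and these disjoint cubes have total
measure at most `b^{-k-1} ∫_P f ≤ |P|/2`.
-/

open Topology

section Cubes

variable {n : ℕ}

lemma cube_eq_preimage (a : Fin n → ℝ) (h : ℝ) :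
    cube n a h = (MeasurableEquiv.toLp 2 (Fin n → ℝ)).symm ⁻¹'
      univ.pi fun i => Ico (a i) (a i + h) := by
  ext x
  simp [cube, MeasurableEquiv.coe_toLp_symm, Set.mem_pi]

lemma measurableSet_cube (a : Fin n → ℝ) (h : ℝ) : MeasurableSet (cube n a h) := by
  rw [cube_eq_preimage]
  exact (MeasurableEquiv.toLp 2 (Fin n → ℝ)).symm.measurable
    (MeasurableSet.univ_pi fun _ => measurableSet_Ico)

lemma volume_cube (a : Fin n → ℝ) (h : ℝ) :
    volume (cube n a h) = ENNReal.ofReal h ^ n := by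
  rw [cube_eq_preimage,
    (EuclideanSpace.volume_preserving_symm_measurableEquiv_toLp (Fin n)).measure_preimage
      (MeasurableSet.univ_pi fun _ => measurableSet_Ico).nullMeasurableSet,
    volume_pi_pi]
  simp [Real.volume_Ico]

lemma cube_nonempty (a : Fin n → ℝ) {h : ℝ} (hh : 0 < h) : (cube n a h).Nonempty :=
  ⟨WithLp.toLp 2 a, fun _ => ⟨le_rfl, lt_add_of_pos_right _ hh⟩⟩

lemma exists_isCompact_superset_cube (a : Fin n → ℝ) (h : ℝ) :
    ∃ K, IsCompact K ∧ cube n a h ⊆ K :=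
  ⟨(PiLp.continuousLinearEquiv 2 ℝ (fun _ : Fin n => ℝ)).toHomeomorph ⁻¹'
      univ.pi fun i => Icc (a i) (a i + h),
    (PiLp.continuousLinearEquiv 2 ℝ _).toHomeomorph.isCompact_preimage.2
      (isCompact_univ_pi fun _ => isCompact_Icc),
    fun _ hx i _ => ⟨(hx i).1, (hx i).2.le⟩⟩

lemma lavg_mul_volume {Q : Set (Eucl n)} (F : Eucl n → ℝ≥0∞) (h0 : volume Q ≠ 0)
    (htop : volume Q ≠ ⊤) : lavg Q F * volume Q = ∫⁻ x in Q, F x :=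
  ENNReal.div_mul_cancel h0 htop

end Cubes

lemma ENNReal.lt_of_zpow_lt_zpow {b : ℝ≥0∞} (hb : 1 ≤ b) {i j : ℤ} (h : b ^ i < b ^ j) :
    i < j :=
  lt_of_not_ge fun hji => h.not_ge (ENNReal.zpow_le_of_le hb hji)

theorem ENNReal.tsum_indicator_Iic_eq {w : ℤ → ℝ≥0∞} {ρ : ℝ≥0∞}
    (hw : ∀ k, w k = ρ * w (k + 1)) (m : ℤ) :
    ∑' k, (Iic m).indicator w k = (1 - ρ)⁻¹ * w m := by
  have hgeom : ∀ j : ℕ, w (m - j) = ρ ^ j * w m := by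
    intro j
    induction j with
    | zero => simp
    | succ j ih =>
      rw [hw, show m - (j + 1 : ℕ) + 1 = m - j by push_cast; ring, ih, pow_succ', mul_assoc]
  have hinj : Function.Injective fun j : ℕ => (⟨m - j, by simp⟩ : Iic m) :=
    fun i j hij => by simpa using congrArg Subtype.val hij
  have hsupp : Function.support (fun k : Iic m => w k) ⊆ range fun j : ℕ => ⟨m - j, by simp⟩ :=
    fun k _ => ⟨(m - k).toNat, Subtype.ext (by
      have := k.2
      simp only [mem_Iic] at this
      simp
      omega)⟩
  rw [← tsum_subtype, ← hinj.tsum_eq hsupp]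
  simp only [hgeom, ENNReal.tsum_mul_right, ENNReal.tsum_geometric]

theorem ENNReal.tsum_mul_le_of_forall_exists_ge {w A : ℤ → ℝ≥0∞} {s : Set ℤ} {c C : ℝ≥0∞}
    (hw : ∀ m, ∑' k, (Iic m).indicator w k ≤ C * w m)
    (hA : ∀ k, A k ≠ 0 → ∃ m ∈ s, k ≤ m ∧ A k ≤ c * A m) :
    ∑' k, w k * A k ≤ c * C * ∑' m, s.indicator (fun m => w m * A m) m := by
  -- Bounding a term by the sum over all admissible later indices avoids choosing one of them.
  have hterm : ∀ k,
      w k * A k ≤ ∑' m, s.indicator (fun m => (Iic m).indicator w k * (c * A m)) m := by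
    intro k
    by_cases hk : A k = 0
    · simp [hk]
    obtain ⟨m, hms, hkm, hAm⟩ := hA k hk
    calc w k * A k ≤ w k * (c * A m) := by gcongr
      _ = s.indicator (fun m => (Iic m).indicator w k * (c * A m)) m := by
        simp [hms, hkm]
      _ ≤ _ := ENNReal.le_tsum m
  calc ∑' k, w k * A k
      ≤ ∑' k, ∑' m, s.indicator (fun m => (Iic m).indicator w k * (c * A m)) m :=
        ENNReal.tsum_le_tsum hterm
    _ = ∑' m, s.indicator (fun m => (∑' k, (Iic m).indicator w k) * (c * A m)) m := by
        rw [ENNReal.tsum_comm]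
        refine tsum_congr fun m => ?_
        by_cases hm : m ∈ s <;> simp [hm, ENNReal.tsum_mul_right]
    _ ≤ ∑' m, s.indicator (fun m => c * C * (w m * A m)) m := by
        refine ENNReal.tsum_le_tsum fun m => indicator_le_indicator ?_
        calc (∑' k, (Iic m).indicator w k) * (c * A m) ≤ C * w m * (c * A m) := by
              gcongr; exact hw m
          _ = c * C * (w m * A m) := by ring
    _ = c * C * ∑' m, s.indicator (fun m => w m * A m) m := by
        simp only [indicator_const_mul, ENNReal.tsum_mul_left]

theorem MeasureTheory.mul_measure_sUnion_le_setLIntegral {X : Type*} [MeasurableSpace X]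
    {μ : Measure X} {𝒯 : Set (Set X)} {P : Set X} {F : X → ℝ≥0∞} {t : ℝ≥0∞}
    (hc : 𝒯.Countable) (hmeas : ∀ T ∈ 𝒯, MeasurableSet T) (hdisj : 𝒯.PairwiseDisjoint id)
    (hsub : ∀ T ∈ 𝒯, T ⊆ P) (ht : ∀ T ∈ 𝒯, t * μ T ≤ ∫⁻ x in T, F x ∂μ) :
    t * μ (⋃₀ 𝒯) ≤ ∫⁻ x in P, F x ∂μ :=
  calc t * μ (⋃₀ 𝒯) = ∑' T : 𝒯, t * μ T := by
        rw [measure_sUnion hc hdisj hmeas, ENNReal.tsum_mul_left]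
    _ ≤ ∑' T : 𝒯, ∫⁻ x in T, F x ∂μ := ENNReal.tsum_le_tsum fun T => ht T T.2
    _ = ∫⁻ x in ⋃₀ 𝒯, F x ∂μ := by rw [sUnion_eq_biUnion, lintegral_biUnion hc hmeas hdisj]
    _ ≤ ∫⁻ x in P, F x ∂μ := lintegral_mono_set (sUnion_subset hsub)

namespace IsDyadicGrid

variable {n : ℕ} {D : Set (Set (Eucl n))} {P Q : Set (Eucl n)} {x : Eucl n}

/-- The cube of `D` of side length `2 ^ k` containing `x`. -/
def cubeAt (hD : IsDyadicGrid n D) (k : ℤ) (x : Eucl n) : Set (Eucl n) :=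
  (hD.2.2 k x).exists.choose

lemma cubeAt_spec (hD : IsDyadicGrid n D) (k : ℤ) (x : Eucl n) :
    hD.cubeAt k x ∈ D ∧ (∃ a, hD.cubeAt k x = cube n a (2 ^ k)) ∧ x ∈ hD.cubeAt k x :=
  (hD.2.2 k x).exists.choose_spec

lemma cubeAt_mem (hD : IsDyadicGrid n D) (k : ℤ) (x : Eucl n) : hD.cubeAt k x ∈ D :=
  (hD.cubeAt_spec k x).1

lemma mem_cubeAt (hD : IsDyadicGrid n D) (k : ℤ) (x : Eucl n) : x ∈ hD.cubeAt k x :=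
  (hD.cubeAt_spec k x).2.2

lemma volume_cubeAt (hD : IsDyadicGrid n D) (k : ℤ) (x : Eucl n) :
    volume (hD.cubeAt k x) = ENNReal.ofReal (2 ^ k) ^ n := by
  obtain ⟨a, ha⟩ := (hD.cubeAt_spec k x).2.1
  rw [ha, volume_cube]

lemma volume_cubeAt_add_one (hD : IsDyadicGrid n D) (k : ℤ) (x : Eucl n) :
    volume (hD.cubeAt (k + 1) x) = 2 ^ n * volume (hD.cubeAt k x) := by
  rw [volume_cubeAt, volume_cubeAt, zpow_add_one₀ two_ne_zero,
    ENNReal.ofReal_mul (by positivity), mul_pow, mul_comm]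
  simp

lemma eq_cubeAt (hD : IsDyadicGrid n D) (hQ : Q ∈ D) (hx : x ∈ Q) : ∃ k, Q = hD.cubeAt k x := by
  obtain ⟨a, k, rfl⟩ := hD.1 Q hQ
  exact ⟨k, (hD.2.2 k x).unique ⟨hQ, ⟨a, rfl⟩, hx⟩ (hD.cubeAt_spec k x)⟩

lemma subset_or_subset_of_mem (hD : IsDyadicGrid n D) (hP : P ∈ D) (hQ : Q ∈ D)
    (hxP : x ∈ P) (hxQ : x ∈ Q) : P ⊆ Q ∨ Q ⊆ P := by
  rcases hD.2.1 P hP Q hQ with h | h | h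
  · exact Or.inl (h ▸ inter_subset_right)
  · exact Or.inr (h ▸ inter_subset_left)
  · exact absurd (h ▸ ⟨hxP, hxQ⟩ : x ∈ (∅ : Set (Eucl n))) (notMem_empty x)

lemma cubeAt_subset_cubeAt_iff (hD : IsDyadicGrid n D) (hn : n ≠ 0) {j k : ℤ} :
    hD.cubeAt j x ⊆ hD.cubeAt k x ↔ j ≤ k := by
  have hle : ∀ {j k : ℤ}, hD.cubeAt j x ⊆ hD.cubeAt k x → j ≤ k := fun h => by
    have := measure_mono (μ := volume) h
    rwa [volume_cubeAt, volume_cubeAt, ENNReal.pow_le_pow_left_iff hn,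
      ENNReal.ofReal_le_ofReal_iff (by positivity),
      zpow_le_zpow_iff_right₀ (one_lt_two : (1 : ℝ) < 2)] at this
  refine ⟨hle, fun hjk => ?_⟩
  rcases hD.subset_or_subset_of_mem (hD.cubeAt_mem j x) (hD.cubeAt_mem k x)
    (hD.mem_cubeAt j x) (hD.mem_cubeAt k x) with h | h
  · exact h
  · obtain rfl := le_antisymm hjk (hle h)
    exact h

lemma cubeAt_injective (hD : IsDyadicGrid n D) (hn : n ≠ 0) (x : Eucl n) :
    Function.Injective (hD.cubeAt · x) :=
  fun _ _ h => le_antisymm ((hD.cubeAt_subset_cubeAt_iff hn).1 h.le)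
    ((hD.cubeAt_subset_cubeAt_iff hn).1 h.ge)

lemma measurableSet_of_mem (hD : IsDyadicGrid n D) (hQ : Q ∈ D) : MeasurableSet Q := by
  obtain ⟨a, k, rfl⟩ := hD.1 Q hQ
  exact measurableSet_cube a _

lemma nonempty_of_mem (hD : IsDyadicGrid n D) (hQ : Q ∈ D) : Q.Nonempty := by
  obtain ⟨a, k, rfl⟩ := hD.1 Q hQ
  exact cube_nonempty a (zpow_pos two_pos k)

lemma volume_ne_zero_of_mem (hD : IsDyadicGrid n D) (hQ : Q ∈ D) : volume Q ≠ 0 := by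
  obtain ⟨a, k, rfl⟩ := hD.1 Q hQ
  rw [volume_cube]
  exact pow_ne_zero _ (ENNReal.ofReal_pos.2 (zpow_pos two_pos k)).ne'

lemma volume_ne_top_of_mem (hD : IsDyadicGrid n D) (hQ : Q ∈ D) : volume Q ≠ ⊤ := by
  obtain ⟨a, k, rfl⟩ := hD.1 Q hQ
  rw [volume_cube]
  exact ENNReal.pow_ne_top ENNReal.ofReal_ne_top

lemma countable_of_pairwiseDisjoint (hD : IsDyadicGrid n D) {𝒯 : Set (Set (Eucl n))}
    (h𝒯 : 𝒯 ⊆ D) (hdisj : 𝒯.PairwiseDisjoint id) : 𝒯.Countable := by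
  rw [← countable_coe_iff, ← countable_univ_iff]
  convert Measure.countable_meas_pos_of_disjoint_iUnion₀ (μ := volume)
    (As := fun T : 𝒯 => (T : Set (Eucl n)))
    (fun T => (hD.measurableSet_of_mem (h𝒯 T.2)).nullMeasurableSet)
    (fun T T' hTT' => (hdisj T.2 T'.2 (Subtype.coe_ne_coe.2 hTT')).aedisjoint)
  exact (eq_univ_of_forall fun T => pos_iff_ne_zero.2 (hD.volume_ne_zero_of_mem (h𝒯 T.2))).symm

lemma disjoint_of_maximal (hD : IsDyadicGrid n D) {s : Set (Set (Eucl n))} (hs : s ⊆ D)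
    (hP : Maximal (· ∈ s) P) (hQ : Maximal (· ∈ s) Q) (hPQ : P ≠ Q) : Disjoint P Q := by
  refine not_not.1 fun h => ?_
  obtain ⟨x, hxP, hxQ⟩ := not_disjoint_iff.1 h
  rcases hD.subset_or_subset_of_mem (hs hP.1) (hs hQ.1) hxP hxQ with h | h
  · exact hPQ (hP.eq_of_subset hQ.1 h)
  · exact hPQ (hQ.eq_of_subset hP.1 h).symm

lemma tendsto_lavg_cubeAt (hD : IsDyadicGrid n D) (hn : n ≠ 0) {F : Eucl n → ℝ≥0∞}
    (hdecay : ∀ ε : ℝ, 0 < ε → ∃ M : ℝ, ∀ Q ∈ D, M ≤ (volume Q).toReal →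
      lavg Q F ≤ ENNReal.ofReal ε) (x : Eucl n) :
    Tendsto (fun k => lavg (hD.cubeAt k x) F) atTop (𝓝 0) := by
  refine ENNReal.tendsto_nhds_zero.2 fun ε hε => ?_
  obtain ⟨δ, -, hδ0, hδε⟩ := ENNReal.lt_iff_exists_real_btwn.1 hε
  obtain ⟨M, hM⟩ := hdecay δ (ENNReal.ofReal_pos.1 hδ0)
  obtain ⟨N, hN⟩ := pow_unbounded_of_one_lt M (one_lt_two : (1 : ℝ) < 2)
  filter_upwards [eventually_ge_atTop (N : ℤ)] with k hk
  refine (hM _ (hD.cubeAt_mem k x) ?_).trans hδε.le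
  rw [hD.volume_cubeAt, ENNReal.toReal_pow, ENNReal.toReal_ofReal (by positivity)]
  calc M ≤ 2 ^ N := hN.le
    _ = (2 : ℝ) ^ (N : ℤ) := (zpow_natCast 2 N).symm
    _ ≤ 2 ^ k := zpow_le_zpow_right₀ one_le_two hk
    _ ≤ (2 ^ k) ^ n := le_self_pow₀ (one_le_zpow₀ one_le_two (le_trans (by positivity) hk)) hn

lemma lavg_ne_top (hD : IsDyadicGrid n D) {f : Eucl n → ℝ} (hf : LocallyIntegrable f volume)
    (hQ : Q ∈ D) : lavg Q (fun y => ENNReal.ofReal (f y)) ≠ ⊤ := by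
  obtain ⟨a, k, rfl⟩ := hD.1 Q hQ
  obtain ⟨K, hK, hsub⟩ := exists_isCompact_superset_cube a (2 ^ k)
  exact ENNReal.div_ne_top ((hf.integrableOn_isCompact hK).mono_set hsub).lintegral_lt_top.ne
    (hD.volume_ne_zero_of_mem hQ)

end IsDyadicGrid

section Stopping

variable {n : ℕ} {D : Set (Set (Eucl n))} {F : Eucl n → ℝ≥0∞}

def cubesAbove (D : Set (Set (Eucl n))) (F : Eucl n → ℝ≥0∞) (t : ℝ≥0∞) : Set (Set (Eucl n)) :=
  {Q | Q ∈ D ∧ t < lavg Q F}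

def stoppingCubes (D : Set (Set (Eucl n))) (F : Eucl n → ℝ≥0∞) (b : ℝ≥0∞) :
    Set (Set (Eucl n)) :=
  {Q | ∃ j : ℤ, Maximal (· ∈ cubesAbove D F (b ^ j)) Q}

lemma stoppingCubes_subset (b : ℝ≥0∞) : stoppingCubes D F b ⊆ D :=
  fun _ ⟨_, hQ⟩ => hQ.1.1

lemma cubesAbove_anti {s t : ℝ≥0∞} (hst : s ≤ t) : cubesAbove D F t ⊆ cubesAbove D F s :=
  fun _ hQ => ⟨hQ.1, hst.trans_lt hQ.2⟩

lemma IsDyadicGrid.exists_maximal_superset (hD : IsDyadicGrid n D) (hn : n ≠ 0)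
    (hdecay : ∀ x, Tendsto (fun k => lavg (hD.cubeAt k x) F) atTop (𝓝 0)) {t : ℝ≥0∞}
    (ht : t ≠ 0) {Q : Set (Eucl n)} (hQ : Q ∈ cubesAbove D F t) :
    ∃ P, Q ⊆ P ∧ Maximal (· ∈ cubesAbove D F t) P := by
  classical
  obtain ⟨x, hx⟩ := hD.nonempty_of_mem hQ.1
  obtain ⟨i, rfl⟩ := hD.eq_cubeAt hQ.1 hx
  obtain ⟨K, hK⟩ := eventually_atTop.1 <| (hdecay x).eventually (gt_mem_nhds (pos_iff_ne_zero.2 ht))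
  obtain ⟨m, hm, hmax⟩ :=
    Int.exists_greatest_of_bdd (P := fun k => hD.cubeAt k x ∈ cubesAbove D F t)
    ⟨K, fun k hk => le_of_lt <| lt_of_not_ge fun hKk => (hK k hKk).not_gt hk.2⟩ ⟨i, hQ⟩
  refine ⟨hD.cubeAt m x, (hD.cubeAt_subset_cubeAt_iff hn).2 (hmax i hQ), hm, fun P hP hsub => ?_⟩
  obtain ⟨k, rfl⟩ := hD.eq_cubeAt hP.1 (hsub (hD.mem_cubeAt m x))
  exact (hD.cubeAt_subset_cubeAt_iff hn).2 (hmax k hP)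

lemma IsDyadicGrid.exists_stoppingCube_ge (hD : IsDyadicGrid n D) (hn : n ≠ 0)
    (hdecay : ∀ x, Tendsto (fun k => lavg (hD.cubeAt k x) F) atTop (𝓝 0)) {b : ℝ≥0∞}
    (hb : 1 < b) (hb' : b ≠ ⊤) {k : ℤ} {x : Eucl n} (h0 : lavg (hD.cubeAt k x) F ≠ 0)
    (htop : lavg (hD.cubeAt k x) F ≠ ⊤) :
    ∃ m, k ≤ m ∧ hD.cubeAt m x ∈ stoppingCubes D F b ∧
      lavg (hD.cubeAt k x) F ≤ b * lavg (hD.cubeAt m x) F := by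
  obtain ⟨j, hj, hj'⟩ := ENNReal.exists_mem_Ioc_zpow h0 htop hb hb'
  obtain ⟨P, hsub, hP⟩ := hD.exists_maximal_superset hn hdecay
    (ENNReal.zpow_pos (zero_lt_one.trans hb).ne' hb' j).ne' ⟨hD.cubeAt_mem k x, hj⟩
  obtain ⟨m, rfl⟩ := hD.eq_cubeAt hP.1.1 (hsub (hD.mem_cubeAt k x))
  refine ⟨m, (hD.cubeAt_subset_cubeAt_iff hn).1 hsub, ⟨j, hP⟩, ?_⟩
  calc lavg (hD.cubeAt k x) F ≤ b ^ (j + 1) := hj'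
    _ = b * b ^ j := by rw [ENNReal.zpow_add (zero_lt_one.trans hb).ne' hb', zpow_one, mul_comm]
    _ ≤ b * lavg (hD.cubeAt m x) F := by gcongr; exact hP.1.2.le

lemma IsDyadicGrid.exists_maximal_between (hD : IsDyadicGrid n D) (hn : n ≠ 0)
    (hdecay : ∀ x, Tendsto (fun k => lavg (hD.cubeAt k x) F) atTop (𝓝 0)) {t μ : ℝ≥0∞}
    (hμ : μ ≠ 0) (htμ : t ≤ μ) {P R : Set (Eucl n)} (hP : Maximal (· ∈ cubesAbove D F t) P)
    (hR : R ∈ cubesAbove D F μ) (hRP : R ⊆ P) :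
    ∃ T, R ⊆ T ∧ T ⊆ P ∧ Maximal (· ∈ cubesAbove D F μ) T := by
  obtain ⟨T, hRT, hT⟩ := hD.exists_maximal_superset hn hdecay hμ hR
  obtain ⟨x, hx⟩ := hD.nonempty_of_mem hR.1
  refine ⟨T, hRT, ?_, hT⟩
  rcases hD.subset_or_subset_of_mem hT.1.1 hP.1.1 (hRT hx) (hRP hx) with h | h
  · exact h
  · exact hP.2 (cubesAbove_anti htμ hT.1) h

lemma lt_lavg_of_mem_stoppingCubes {b : ℝ≥0∞} (hb : 1 ≤ b) {P R : Set (Eucl n)}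
    (hR : R ∈ stoppingCubes D F b) (hRP : R ⊂ P) (hPD : P ∈ D) {k : ℤ}
    (hk : b ^ k < lavg P F) : b ^ (k + 1) < lavg R F := by
  obtain ⟨i, hi⟩ := hR
  have hPi : lavg P F ≤ b ^ i := not_lt.1 fun h => hi.not_prop_of_ssuperset hRP ⟨hPD, h⟩
  have hki : k < i := ENNReal.lt_of_zpow_lt_zpow hb (hk.trans_le hPi)
  exact (ENNReal.zpow_le_of_le hb hki).trans_lt hi.1.2

end Stopping

section Sparse

variable {n : ℕ} {D : Set (Set (Eucl n))} {F : Eucl n → ℝ≥0∞}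

lemma IsDyadicGrid.setLIntegral_le_of_maximal (hD : IsDyadicGrid n D) (hn : n ≠ 0)
    {t : ℝ≥0∞} {P : Set (Eucl n)} (hP : Maximal (· ∈ cubesAbove D F t) P) :
    ∫⁻ y in P, F y ≤ 2 ^ n * t * volume P := by
  obtain ⟨x, hx⟩ := hD.nonempty_of_mem hP.1.1
  obtain ⟨k, rfl⟩ := hD.eq_cubeAt hP.1.1 hx
  have hsub : hD.cubeAt k x ⊆ hD.cubeAt (k + 1) x :=
    (hD.cubeAt_subset_cubeAt_iff hn).2 (Int.le_add_one le_rfl)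
  have hparent : lavg (hD.cubeAt (k + 1) x) F ≤ t := not_lt.1 fun h => by
    have := hD.cubeAt_injective hn x (hP.eq_of_subset ⟨hD.cubeAt_mem _ x, h⟩ hsub)
    omega
  calc ∫⁻ y in hD.cubeAt k x, F y ≤ ∫⁻ y in hD.cubeAt (k + 1) x, F y := lintegral_mono_set hsub
    _ = lavg (hD.cubeAt (k + 1) x) F * volume (hD.cubeAt (k + 1) x) :=
        (lavg_mul_volume F (hD.volume_ne_zero_of_mem (hD.cubeAt_mem _ x))
          (hD.volume_ne_top_of_mem (hD.cubeAt_mem _ x))).symm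
    _ ≤ t * (2 ^ n * volume (hD.cubeAt k x)) := by rw [hD.volume_cubeAt_add_one]; gcongr
    _ = 2 ^ n * t * volume (hD.cubeAt k x) := by ring

lemma IsDyadicGrid.two_mul_volume_sUnion_maximal_le (hD : IsDyadicGrid n D) (hn : n ≠ 0)
    {t : ℝ≥0∞} (ht : t ≠ 0) (ht' : t ≠ ⊤) {P : Set (Eucl n)}
    (hP : Maximal (· ∈ cubesAbove D F t) P) :
    2 * volume (⋃₀ {T | Maximal (· ∈ cubesAbove D F (2 ^ (n + 1) * t)) T ∧ T ⊆ P}) ≤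
      volume P := by
  set 𝒯 := {T | Maximal (· ∈ cubesAbove D F (2 ^ (n + 1) * t)) T ∧ T ⊆ P}
  have h𝒯D : 𝒯 ⊆ D := fun T hT => hT.1.1.1
  have hdisj : 𝒯.PairwiseDisjoint id := fun T hT T' hT' hne =>
    hD.disjoint_of_maximal (fun _ hQ => hQ.1) hT.1 hT'.1 hne
  have hbound := mul_measure_sUnion_le_setLIntegral (hD.countable_of_pairwiseDisjoint h𝒯D hdisj)
    (fun T hT => hD.measurableSet_of_mem (h𝒯D hT)) hdisj (fun T hT => hT.2)
    (fun T hT => ENNReal.mul_le_of_le_div hT.1.1.2.le)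
  have hc : 2 ^ n * t ≠ 0 := mul_ne_zero (by simp) ht
  have hc' : 2 ^ n * t ≠ ⊤ := ENNReal.mul_ne_top (by simp) ht'
  refine (ENNReal.mul_le_mul_iff_right hc hc').1 ?_
  calc 2 ^ n * t * (2 * volume (⋃₀ 𝒯)) = 2 ^ (n + 1) * t * volume (⋃₀ 𝒯) := by ring
    _ ≤ ∫⁻ y in P, F y := hbound
    _ ≤ 2 ^ n * t * volume P := hD.setLIntegral_le_of_maximal hn hP

theorem IsDyadicGrid.isSparse_stoppingCubes (hD : IsDyadicGrid n D) (hn : n ≠ 0)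
    (hdecay : ∀ x, Tendsto (fun k => lavg (hD.cubeAt k x) F) atTop (𝓝 0))
    (hfin : ∀ Q ∈ D, lavg Q F ≠ ⊤) : IsSparse (stoppingCubes D F (2 ^ (n + 1))) := by
  set b : ℝ≥0∞ := 2 ^ (n + 1)
  have hb : 1 < b := one_lt_pow₀ one_lt_two n.succ_ne_zero
  have hb' : b ≠ ⊤ := ENNReal.pow_ne_top ENNReal.ofNat_ne_top
  rintro P ⟨j, hPj⟩
  have hPD : P ∈ D := hPj.1.1
  obtain ⟨k, hk, hk'⟩ := ENNReal.exists_mem_Ioc_zpow (ne_bot_of_gt hPj.1.2) (hfin P hPD) hb hb'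
  have hb0 : b ≠ 0 := (zero_lt_one.trans hb).ne'
  have hbk : b ^ k ≠ 0 := (ENNReal.zpow_pos hb0 hb' k).ne'
  have hPk : Maximal (· ∈ cubesAbove D F (b ^ k)) P := by
    refine hPj.mono (cubesAbove_anti (ENNReal.zpow_le_of_le hb.le ?_)) ⟨hPD, hk⟩
    exact Int.lt_add_one_iff.1 (ENNReal.lt_of_zpow_lt_zpow hb.le (hPj.1.2.trans_le hk'))
  set W := ⋃₀ {T | Maximal (· ∈ cubesAbove D F (b * b ^ k)) T ∧ T ⊆ P}
  have hcover : ⋃ R ∈ {R | R ∈ stoppingCubes D F b ∧ R ⊂ P}, R ⊆ W := by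
    refine iUnion₂_subset fun R ⟨hR, hRP⟩ => ?_
    have hRb : b * b ^ k < lavg R F := by
      have := lt_lavg_of_mem_stoppingCubes hb.le hR hRP hPD hk
      rwa [ENNReal.zpow_add hb0 hb', zpow_one, mul_comm] at this
    obtain ⟨T, hRT, hTP, hT⟩ := hD.exists_maximal_between hn hdecay (mul_ne_zero (by simp [b]) hbk)
      (le_mul_of_one_le_left' hb.le) hPk ⟨stoppingCubes_subset b hR, hRb⟩ hRP.subset
    exact hRT.trans (subset_sUnion_of_mem ⟨hT, hTP⟩)
  have hW : 2 * volume W ≤ volume P :=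
    hD.two_mul_volume_sUnion_maximal_le hn hbk (ENNReal.zpow_ne_top hb0 hb' k) hPk
  have hPE : volume P ≤ volume W + volume (sparseE (stoppingCubes D F b) P) := by
    refine (measure_mono fun y hy => ?_).trans (measure_union_le W _)
    by_cases hyW : y ∈ W
    · exact Or.inl hyW
    · exact Or.inr ⟨hy, fun h => hyW (hcover h)⟩
  refine ENNReal.le_of_add_le_add_left (hD.volume_ne_top_of_mem hPD) ?_
  calc volume P + volume P = 2 * volume P := (two_mul _).symm
    _ ≤ 2 * volume W + 2 * volume (sparseE (stoppingCubes D F b) P) := by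
        rw [← mul_add]; gcongr
    _ ≤ volume P + 2 * volume (sparseE (stoppingCubes D F b) P) := by gcongr

end Sparse

section FractionalIntegral

variable {n : ℕ} {D : Set (Set (Eucl n))}

lemma fracIntGrid_mono {α : ℝ} {S : Set (Set (Eucl n))} (hS : S ⊆ D) (f : Eucl n → ℝ)
    (x : Eucl n) : fracIntGrid n α S f x ≤ fracIntGrid n α D f x := by
  unfold fracIntGrid
  exact ENNReal.tsum_mono_subtype (fun Q => Q.indicator (fun _ => volume Q ^ (α / (n : ℝ)) *
    lavg Q (fun y => ENNReal.ofReal (f y))) x) hS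

lemma IsDyadicGrid.fracIntGrid_eq_tsum_cubeAt (hD : IsDyadicGrid n D) (hn : n ≠ 0) (α : ℝ)
    {E : Set (Set (Eucl n))} (hE : E ⊆ D) (f : Eucl n → ℝ) (x : Eucl n) :
    fracIntGrid n α E f x = ∑' k, {k | hD.cubeAt k x ∈ E}.indicator (fun k =>
      volume (hD.cubeAt k x) ^ (α / (n : ℝ)) *
        lavg (hD.cubeAt k x) (fun y => ENNReal.ofReal (f y))) k := by
  set g : E → ℝ≥0∞ := fun Q => (Q : Set (Eucl n)).indicator (fun _ => volume (Q : Set (Eucl n)) ^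
    (α / (n : ℝ)) * lavg Q (fun y => ENNReal.ofReal (f y))) x
  set c : {k // hD.cubeAt k x ∈ E} → E := fun k => ⟨hD.cubeAt k x, k.2⟩
  have hc : Function.Injective c := fun k k' h =>
    Subtype.ext (hD.cubeAt_injective hn x (congrArg Subtype.val h))
  have hsupp : Function.support g ⊆ range c := by
    intro Q hQ
    obtain ⟨k, hk⟩ := hD.eq_cubeAt (hE Q.2) (not_not.1 (mt (indicator_of_notMem · _) hQ))
    exact ⟨⟨k, hk ▸ Q.2⟩, Subtype.ext hk.symm⟩
  rw [← tsum_subtype, fracIntGrid, ← hc.tsum_eq hsupp]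
  exact tsum_congr fun k => indicator_of_mem (hD.mem_cubeAt k x) _

lemma IsDyadicGrid.volume_cubeAt_rpow (hD : IsDyadicGrid n D) (hn : n ≠ 0) (α : ℝ) (k : ℤ)
    (x : Eucl n) : volume (hD.cubeAt k x) ^ (α / (n : ℝ)) =
      2 ^ (-α) * volume (hD.cubeAt (k + 1) x) ^ (α / (n : ℝ)) := by
  have h2n : ((2 : ℝ≥0∞) ^ n) ^ (α / (n : ℝ)) = 2 ^ α := by
    rw [← ENNReal.rpow_natCast, ← ENNReal.rpow_mul, mul_div_cancel₀ _ (Nat.cast_ne_zero.2 hn)]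
  rw [hD.volume_cubeAt_add_one, ENNReal.mul_rpow_of_ne_top (by simp)
    (hD.volume_ne_top_of_mem (hD.cubeAt_mem k x)), h2n, ← mul_assoc,
    ← ENNReal.rpow_add _ _ two_ne_zero ENNReal.ofNat_ne_top, neg_add_cancel, ENNReal.rpow_zero,
    one_mul]

theorem IsDyadicGrid.fracIntGrid_le_mul_stoppingCubes (hD : IsDyadicGrid n D) (hn : n ≠ 0)
    (α : ℝ) {f : Eucl n → ℝ}
    (hdecay : ∀ x, Tendsto (fun k => lavg (hD.cubeAt k x) (fun y => ENNReal.ofReal (f y))) atTop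
      (𝓝 0))
    (hfin : ∀ Q ∈ D, lavg Q (fun y => ENNReal.ofReal (f y)) ≠ ⊤) {b : ℝ≥0∞} (hb : 1 < b)
    (hb' : b ≠ ⊤) (x : Eucl n) :
    fracIntGrid n α D f x ≤ b * (1 - 2 ^ (-α))⁻¹ *
      fracIntGrid n α (stoppingCubes D (fun y => ENNReal.ofReal (f y)) b) f x := by
  rw [hD.fracIntGrid_eq_tsum_cubeAt hn α subset_rfl, hD.fracIntGrid_eq_tsum_cubeAt hn α
    (stoppingCubes_subset b)]
  simp only [hD.cubeAt_mem, ofPred_true, indicator_univ]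
  refine ENNReal.tsum_mul_le_of_forall_exists_ge
    (fun m => (ENNReal.tsum_indicator_Iic_eq (hD.volume_cubeAt_rpow hn α · x) m).le)
    fun k hk => ?_
  obtain ⟨m, hkm, hm, hle⟩ :=
    hD.exists_stoppingCube_ge hn hdecay hb hb' hk (hfin _ (hD.cubeAt_mem k x))
  exact ⟨m, hm, hkm, hle⟩

end FractionalIntegral

theorem statement6_general (n : ℕ) (hn : 0 < n) (α : ℝ) (hα0 : 0 < α)
    (D : Set (Set (Eucl n))) (hD : IsDyadicGrid n D) :
    ∃ C : ℝ≥0, 0 < C ∧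
      ∀ f : Eucl n → ℝ, LocallyIntegrable f volume → (∀ y, 0 ≤ f y) →
        (∀ ε : ℝ, 0 < ε → ∃ M : ℝ, ∀ Q ∈ D, M ≤ (volume Q).toReal →
          lavg Q (fun y => ENNReal.ofReal (f y)) ≤ ENNReal.ofReal ε) →
        ∃ S ⊆ D, IsSparse S ∧ ∀ x : Eucl n,
          fracIntGrid n α S f x ≤ fracIntGrid n α D f x ∧
          fracIntGrid n α D f x ≤ (C : ℝ≥0∞) * fracIntGrid n α S f x := by
  set b : ℝ≥0∞ := 2 ^ (n + 1)
  have hb : 1 < b := one_lt_pow₀ one_lt_two n.succ_ne_zero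
  have hb' : b ≠ ⊤ := ENNReal.pow_ne_top ENNReal.ofNat_ne_top
  have hρ : (2 : ℝ≥0∞) ^ (-α) < 1 := ENNReal.rpow_lt_one_of_one_lt_of_neg one_lt_two (by linarith)
  set C : ℝ≥0∞ := b * (1 - 2 ^ (-α))⁻¹
  have hC : C ≠ ⊤ := ENNReal.mul_ne_top hb' (ENNReal.inv_ne_top.2 (tsub_pos_of_lt hρ).ne')
  have hC0 : C ≠ 0 := mul_ne_zero (zero_lt_one.trans hb).ne' (ENNReal.inv_ne_zero.2
    (ENNReal.sub_ne_top ENNReal.one_ne_top))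
  refine ⟨C.toNNReal, ENNReal.toNNReal_pos hC0 hC, fun f hf _ hdecay => ?_⟩
  have hdecay' := hD.tendsto_lavg_cubeAt hn.ne' hdecay
  have hfin := fun Q (hQ : Q ∈ D) => hD.lavg_ne_top hf hQ
  refine ⟨_, stoppingCubes_subset b, hD.isSparse_stoppingCubes hn.ne' hdecay' hfin,
    fun x => ⟨fracIntGrid_mono (stoppingCubes_subset b) f x, ?_⟩⟩
  rw [ENNReal.coe_toNNReal hC]
  exact hD.fracIntGrid_le_mul_stoppingCubes hn.ne' α hdecay' hfin hb hb' x

/-- sparse domination of the dyadic fractional integral. -/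
theorem statement6 (n : ℕ) (hn : 0 < n) (α : ℝ) (hα0 : 0 < α) (hαn : α < n)
    (D : Set (Set (Eucl n))) (hD : IsDyadicGrid n D) :
    ∃ C : ℝ≥0, 0 < C ∧
      ∀ f : Eucl n → ℝ, LocallyIntegrable f volume → (∀ y, 0 ≤ f y) →
        (∀ ε : ℝ, 0 < ε → ∃ M : ℝ, ∀ Q ∈ D, M ≤ (volume Q).toReal →
          lavg Q (fun y => ENNReal.ofReal (f y)) ≤ ENNReal.ofReal ε) →
        ∃ S ⊆ D, IsSparse S ∧ ∀ x : Eucl n,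
          fracIntGrid n α S f x ≤ fracIntGrid n α D f x ∧
          fracIntGrid n α D f x ≤ (C : ℝ≥0∞) * fracIntGrid n α S f x :=
  statement6_general n hn α hα0 D hD
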